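/- arXiv:2408.10087 — 3 statements merged into one kernel-verified Lean document; each statement's English description precedes it below -/
import Mathlib

section
/- Let (X,e,μ) be an NP_i-digital H-space for i ∈ {1,2}. If x, y ∈ X lie in the same connected component of X, then μ_x ≃_i μ_y and ν_x ≃_i ν_y. -/
/-- A digital image: a finite set with a reflexive, symmetric adjacency relation
(a finite reflexive graph). -/
structure DigImage where
  carrier : Type
  [fintype : Fintype carrier]
  adj : carrier → carrier → Prop
  adj_refl : ∀ x, adj x x
  adj_symm : ∀ {x y}, adj x y → adj y x

attribute [instance] DigImage.fintype

/-- `f : (X,κ) → (Y,λ)` is digitally continuous if it preserves adjacency. -/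
def DigContinuous (X Y : DigImage) (f : X.carrier → Y.carrier) : Prop :=
  ∀ ⦃a b : X.carrier⦄, X.adj a b → Y.adj (f a) (f b)

/-- The product of two digital images with the normal product adjacency `NP_i`
(for `i ≤ 1` this is `NP_1`; otherwise `NP_2`): two pairs are adjacent iff
their coordinates are adjacent in at most `i` positions and equal elsewhere. -/
def DigImage.prod (i : ℕ) (X Y : DigImage) : DigImage where
  carrier := X.carrier × Y.carrier
  adj p q :=
    if i ≤ 1 then (p.1 = q.1 ∧ Y.adj p.2 q.2) ∨ (p.2 = q.2 ∧ X.adj p.1 q.1)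
    else X.adj p.1 q.1 ∧ Y.adj p.2 q.2
  adj_refl p := by
    split_ifs
    · exact Or.inl ⟨rfl, Y.adj_refl p.2⟩
    · exact ⟨X.adj_refl p.1, Y.adj_refl p.2⟩
  adj_symm {p q} h := by
    split_ifs at h ⊢ with hi
    · rcases h with ⟨h1, h2⟩ | ⟨h1, h2⟩
      · exact Or.inl ⟨h1.symm, Y.adj_symm h2⟩
      · exact Or.inr ⟨h1.symm, X.adj_symm h2⟩
    · exact ⟨X.adj_symm h.1, Y.adj_symm h.2⟩

/-- The triple product of digital images with the normal product adjacency `NP_i`: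
coordinates adjacent in at most `i` positions and equal in all other positions. -/
def DigImage.prod3 (i : ℕ) (X Y Z : DigImage) : DigImage where
  carrier := X.carrier × Y.carrier × Z.carrier
  adj p q :=
    if i ≤ 1 then
      (p.1 = q.1 ∧ p.2.1 = q.2.1 ∧ Z.adj p.2.2 q.2.2) ∨
      (p.1 = q.1 ∧ p.2.2 = q.2.2 ∧ Y.adj p.2.1 q.2.1) ∨
      (p.2.1 = q.2.1 ∧ p.2.2 = q.2.2 ∧ X.adj p.1 q.1)
    else
      (p.1 = q.1 ∧ Y.adj p.2.1 q.2.1 ∧ Z.adj p.2.2 q.2.2) ∨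
      (p.2.1 = q.2.1 ∧ X.adj p.1 q.1 ∧ Z.adj p.2.2 q.2.2) ∨
      (p.2.2 = q.2.2 ∧ X.adj p.1 q.1 ∧ Y.adj p.2.1 q.2.1)
  adj_refl p := by
    split_ifs
    · exact Or.inl ⟨rfl, rfl, Z.adj_refl p.2.2⟩
    · exact Or.inl ⟨rfl, Y.adj_refl p.2.1, Z.adj_refl p.2.2⟩
  adj_symm {p q} h := by
    split_ifs at h ⊢ with hi
    · rcases h with ⟨h1, h2, h3⟩ | ⟨h1, h2, h3⟩ | ⟨h1, h2, h3⟩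
      · exact Or.inl ⟨h1.symm, h2.symm, Z.adj_symm h3⟩
      · exact Or.inr (Or.inl ⟨h1.symm, h2.symm, Y.adj_symm h3⟩)
      · exact Or.inr (Or.inr ⟨h1.symm, h2.symm, X.adj_symm h3⟩)
    · rcases h with ⟨h1, h2, h3⟩ | ⟨h1, h2, h3⟩ | ⟨h1, h2, h3⟩
      · exact Or.inl ⟨h1.symm, Y.adj_symm h2, Z.adj_symm h3⟩
      · exact Or.inr (Or.inl ⟨h1.symm, X.adj_symm h2, Z.adj_symm h3⟩)
      · exact Or.inr (Or.inr ⟨h1.symm, X.adj_symm h2, Y.adj_symm h3⟩)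

/-- The digital interval `[0,m]_ℤ` with the standard adjacency `|a−b| ≤ 1`. -/
def digInterval (m : ℕ) : DigImage where
  carrier := Fin (m + 1)
  adj a b := |(a : ℤ) - (b : ℤ)| ≤ 1
  adj_refl a := by simp
  adj_symm {a b} h := by
    have h' : |(a : ℤ) - (b : ℤ)| ≤ 1 := h
    rw [abs_sub_comm] at h'
    exact h'

/-- `f` and `g` are `NP_i`-digitally homotopic: there is an
`NP_i`-continuous `H : X × [0,m]_ℤ → Y` with `H(·,0) = f` and `H(·,m) = g`. -/
def DigHomotopic (i : ℕ) (X Y : DigImage) (f g : X.carrier → Y.carrier) : Prop :=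
  ∃ (m : ℕ) (H : X.carrier × Fin (m + 1) → Y.carrier),
    DigContinuous (DigImage.prod i X (digInterval m)) Y H ∧
    (∀ x, H (x, 0) = f x) ∧ (∀ x, H (x, Fin.last m) = g x)

/-- An `NP_i`-digital H-space `(X,e,μ)`. -/
structure IsHSpace (i : ℕ) (X : DigImage) (e : X.carrier)
    (μ : X.carrier × X.carrier → X.carrier) : Prop where
  continuous : DigContinuous (DigImage.prod i X X) X μ
  right_unit : DigHomotopic i X X (fun x => μ (x, e)) id
  left_unit : DigHomotopic i X X (fun x => μ (e, x)) id

/-- H-equivalence of `NP_i`-digital H-spaces. -/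
def HSpaceEquiv (i : ℕ) (X : DigImage) (eX : X.carrier)
    (μX : X.carrier × X.carrier → X.carrier)
    (Y : DigImage) (eY : Y.carrier)
    (μY : Y.carrier × Y.carrier → Y.carrier) : Prop :=
  ∃ (f : X.carrier → Y.carrier) (g : Y.carrier → X.carrier),
    DigContinuous X Y f ∧ DigContinuous Y X g ∧ f eX = eY ∧ g eY = eX ∧
    DigHomotopic i Y Y (f ∘ g) id ∧ DigHomotopic i X X (g ∘ f) id ∧
    DigHomotopic i (DigImage.prod i X X) Y (fun p => f (μX p)) (fun p => μY (f p.1, f p.2)) ∧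
    DigHomotopic i (DigImage.prod i Y Y) X (fun p => g (μY p)) (fun p => μX (g p.1, g p.2))

/-- `NP_i`-homotopy equivalence of digital images. -/
def DigHtpyEquiv (i : ℕ) (X Y : DigImage) : Prop :=
  ∃ (f : X.carrier → Y.carrier) (g : Y.carrier → X.carrier),
    DigContinuous X Y f ∧ DigContinuous Y X g ∧
    DigHomotopic i X X (g ∘ f) id ∧ DigHomotopic i Y Y (f ∘ g) id

/-- A digital image is `NP_i`-irreducible if it is not `NP_i`-homotopy
equivalent to any digital image with fewer points. -/
def DigIrreducible (i : ℕ) (X : DigImage) : Prop :=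
  ¬ ∃ Y : DigImage, Fintype.card Y.carrier < Fintype.card X.carrier ∧ DigHtpyEquiv i X Y

/-- A digital image is connected if any two points are joined by a path
of consecutively adjacent points. -/
def DigConnected (X : DigImage) : Prop :=
  ∀ a b : X.carrier, Relation.ReflTransGen X.adj a b

/-- A digital image is `NP_i`-contractible if the identity is `NP_i`-homotopic
to a constant map. -/
def DigContractible (i : ℕ) (X : DigImage) : Prop :=
  ∃ c : X.carrier, DigHomotopic i X X id (fun _ => c)

/-- An isomorphism of digital images: a continuous bijection with continuous inverse. -/
def IsDigIso (X Y : DigImage) (f : X.carrier → Y.carrier) : Prop :=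
  DigContinuous X Y f ∧ ∃ g : Y.carrier → X.carrier,
    DigContinuous Y X g ∧ Function.LeftInverse g f ∧ Function.RightInverse g f

/-- The sub-digital-image on the points satisfying `P`, with the induced adjacency. -/
noncomputable def subImage (X : DigImage) (P : X.carrier → Prop) : DigImage where
  carrier := {x : X.carrier // P x}
  fintype := Fintype.ofFinite _
  adj a b := X.adj a.1 b.1
  adj_refl a := X.adj_refl a.1
  adj_symm h := X.adj_symm h

/-- The connected component of `e`, as a digital image. -/
noncomputable def componentImage (X : DigImage) (e : X.carrier) : DigImage :=
  subImage X (fun x => Relation.ReflTransGen X.adj e x)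

/-- Homotopy-associativity of an `NP_i`-digital multiplication:
`μ∘(id × μ) ≃ᵢ μ∘(μ × id)` as maps `X × X × X → X` with `NP_i` adjacency. -/
def HomotopyAssociative (i : ℕ) (X : DigImage)
    (μ : X.carrier × X.carrier → X.carrier) : Prop :=
  DigHomotopic i (DigImage.prod3 i X X X) X
    (fun p => μ (p.1, μ (p.2.1, p.2.2)))
    (fun p => μ (μ (p.1, p.2.1), p.2.2))

/-- `α` is a left homotopy-inverse for the H-space `(X,e,μ)`. -/
def LeftHtpyInverse (i : ℕ) (X : DigImage) (e : X.carrier)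
    (μ : X.carrier × X.carrier → X.carrier) (α : X.carrier → X.carrier) : Prop :=
  DigContinuous X X α ∧ DigContinuous X X (fun x => μ (α x, x)) ∧
  DigHomotopic i X X (fun x => μ (α x, x)) (fun _ => e)

/-- `β` is a right homotopy-inverse for the H-space `(X,e,μ)`. -/
def RightHtpyInverse (i : ℕ) (X : DigImage) (e : X.carrier)
    (μ : X.carrier × X.carrier → X.carrier) (β : X.carrier → X.carrier) : Prop :=
  DigContinuous X X β ∧ DigContinuous X X (fun x => μ (x, β x)) ∧
  DigHomotopic i X X (fun x => μ (x, β x)) (fun _ => e)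

/-- Extract a finite path from `ReflTransGen`. -/
lemma exists_path (X : DigImage) (x y : X.carrier)
    (hxy : Relation.ReflTransGen X.adj x y) :
    ∃ (n : ℕ) (p : ℕ → X.carrier), p 0 = x ∧ p n = y ∧
      ∀ k, k < n → X.adj (p k) (p (k + 1)) := by
  induction hxy with
  | refl => exact ⟨0, fun _ => x, rfl, rfl, fun k hk => absurd hk (Nat.not_lt_zero k)⟩
  | @tail b c _ hbc ih =>
    obtain ⟨n, p, h0, hn, hadj⟩ := ih
    refine ⟨n + 1, fun k => if k ≤ n then p k else c, by simp [h0], by simp, ?_⟩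
    intro k hk
    rcases lt_or_eq_of_le (Nat.lt_succ_iff.mp hk) with hk' | hk'
    · simp only [le_of_lt hk', if_pos, Nat.succ_le_of_lt hk', if_pos]
      exact hadj k hk'
    · subst hk'
      simp only [le_refl, if_pos, Nat.not_succ_le_self, if_neg]
      exact hn ▸ hbc

lemma path_adj (X : DigImage) (n : ℕ) (p : ℕ → X.carrier)
    (hadj : ∀ k, k < n → X.adj (p k) (p (k + 1)))
    (t t' : Fin (n + 1)) (h : |(t : ℤ) - (t' : ℤ)| ≤ 1) :
    X.adj (p t) (p t') := by
  have ht : (t : ℕ) < n + 1 := t.isLt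
  have ht' : (t' : ℕ) < n + 1 := t'.isLt
  have : (t : ℕ) = t' ∨ (t : ℕ) + 1 = t' ∨ (t' : ℕ) + 1 = t := by
    rw [abs_le] at h; omega
  rcases this with h1 | h1 | h1
  · rw [h1]; exact X.adj_refl _
  · rw [← h1]; exact hadj t (by omega)
  · rw [← h1]; exact X.adj_symm (hadj t' (by omega))

/-- If `x` and `y` lie in the same connected component of an
`NP_i`-digital H-space `(X,e,μ)`, then `μ_x ≃ᵢ μ_y` and `ν_x ≃ᵢ ν_y`. -/
theorem mu_nu_homotopic_of_same_component (i : ℕ) (hi : i = 1 ∨ i = 2)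
    (X : DigImage) (e : X.carrier) (μ : X.carrier × X.carrier → X.carrier)
    (h : IsHSpace i X e μ) (x y : X.carrier)
    (hxy : Relation.ReflTransGen X.adj x y) :
    DigHomotopic i X X (fun a => μ (x, a)) (fun a => μ (y, a)) ∧
    DigHomotopic i X X (fun a => μ (a, x)) (fun a => μ (a, y)) := by
  obtain ⟨n, p, h0, hn, hadj⟩ := exists_path X x y hxy
  constructor
  · refine ⟨n, fun q => μ (p q.2, q.1), ?_, fun a => by simp [h0], fun a => by simp [hn]⟩
    rintro ⟨a, t⟩ ⟨a', t'⟩ hq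
    apply h.continuous
    simp only [DigImage.prod, digInterval] at hq ⊢
    split_ifs at hq ⊢ with hle
    · rcases hq with ⟨h1, h2⟩ | ⟨h1, h2⟩
      · exact Or.inr ⟨h1, path_adj X n p hadj t t' h2⟩
      · exact Or.inl ⟨by rw [h1], h2⟩
    · exact ⟨path_adj X n p hadj t t' hq.2, hq.1⟩
  · refine ⟨n, fun q => μ (q.1, p q.2), ?_, fun a => by simp [h0], fun a => by simp [hn]⟩
    rintro ⟨a, t⟩ ⟨a', t'⟩ hq
    apply h.continuous
    simp only [DigImage.prod, digInterval] at hq ⊢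
    split_ifs at hq ⊢ with hle
    · rcases hq with ⟨h1, h2⟩ | ⟨h1, h2⟩
      · exact Or.inl ⟨h1, path_adj X n p hadj t t' h2⟩
      · exact Or.inr ⟨by rw [h1], h2⟩
    · exact ⟨hq.1, path_adj X n p hadj t t' hq.2⟩
end

section
/- Let (X,e,μ) be an NP_i-digital H-space for i ∈ {1,2}, and let X_e denote the connected component of e. Then for every x ∈ X_e, μ_x ≃_i id_X and ν_x ≃_i id_X. -/
lemma prod_adj_intro (i : ℕ) (X Y : DigImage) {p q : X.carrier × Y.carrier}
    (h1 : X.adj p.1 q.1) (h2 : Y.adj p.2 q.2)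
    (h3 : i ≤ 1 → p.1 = q.1 ∨ p.2 = q.2) :
    (DigImage.prod i X Y).adj p q := by
  unfold DigImage.prod
  dsimp only
  split_ifs with hi
  · rcases h3 hi with h3 | h3
    · exact Or.inl ⟨h3, h2⟩
    · exact Or.inr ⟨h3, h1⟩
  · exact ⟨h1, h2⟩

lemma prod_adj_elim (i : ℕ) (X Y : DigImage) {p q : X.carrier × Y.carrier}
    (h : (DigImage.prod i X Y).adj p q) :
    X.adj p.1 q.1 ∧ Y.adj p.2 q.2 ∧ (i ≤ 1 → p.1 = q.1 ∨ p.2 = q.2) := by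
  unfold DigImage.prod at h
  dsimp only at h
  split_ifs at h with hi
  · rcases h with ⟨h1, h2⟩ | ⟨h1, h2⟩
    · exact ⟨by rw [h1]; exact X.adj_refl _, h2, fun _ => Or.inl h1⟩
    · exact ⟨h2, by rw [h1]; exact Y.adj_refl _, fun _ => Or.inr h1⟩
  · exact ⟨h.1, h.2, fun h' => absurd h' hi⟩

lemma interval_adj_of (m : ℕ) {a b : Fin (m + 1)}
    (h1 : a.val ≤ b.val + 1) (h2 : b.val ≤ a.val + 1) :
    (digInterval m).adj a b := by
  show |(a : ℤ) - (b : ℤ)| ≤ 1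
  rw [abs_le]
  omega

lemma interval_adj_to (m : ℕ) {a b : Fin (m + 1)}
    (h : (digInterval m).adj a b) :
    a.val ≤ b.val + 1 ∧ b.val ≤ a.val + 1 := by
  have h' : |(a : ℤ) - (b : ℤ)| ≤ 1 := h
  rw [abs_le] at h'
  omega

lemma dh_refl (i : ℕ) (X Y : DigImage) (f : X.carrier → Y.carrier)
    (hf : DigContinuous X Y f) : DigHomotopic i X Y f f := by
  refine ⟨0, fun p => f p.1, ?_, fun _ => rfl, fun _ => rfl⟩
  intro p q hpq
  exact hf (prod_adj_elim i X _ hpq).1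

lemma dh_symm {i : ℕ} {X Y : DigImage} {f g : X.carrier → Y.carrier}
    (h : DigHomotopic i X Y f g) : DigHomotopic i X Y g f := by
  obtain ⟨m, H, hc, h0, hm⟩ := h
  refine ⟨m, fun p => H (p.1, p.2.rev), ?_, ?_, ?_⟩
  · intro p q hpq
    obtain ⟨h1, h2, h3⟩ := prod_adj_elim i X _ hpq
    obtain ⟨ha, hb⟩ := interval_adj_to m h2
    apply hc
    apply prod_adj_intro
    · exact h1
    · apply interval_adj_of <;>
        (have hp := p.2.isLt; have hq := q.2.isLt;
         simp only [Fin.val_rev]; omega)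
    · intro hi
      rcases h3 hi with h3 | h3
      · exact Or.inl h3
      · exact Or.inr (Fin.ext (show p.2.rev.val = q.2.rev.val by rw [h3]))
  · intro x
    show H (x, (0 : Fin (m + 1)).rev) = g x
    have : (0 : Fin (m + 1)).rev = Fin.last m := by
      ext; simp [Fin.val_rev]
    rw [this]; exact hm x
  · intro x
    show H (x, (Fin.last m).rev) = f x
    have : (Fin.last m).rev = (0 : Fin (m + 1)) := by
      ext; simp [Fin.val_rev]
    rw [this]; exact h0 x

lemma dh_trans {i : ℕ} {X Y : DigImage} {f g h : X.carrier → Y.carrier}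
    (hfg : DigHomotopic i X Y f g) (hgh : DigHomotopic i X Y g h) :
    DigHomotopic i X Y f h := by
  obtain ⟨m1, H1, c1, s1, e1⟩ := hfg
  obtain ⟨m2, H2, c2, s2, e2⟩ := hgh
  refine ⟨m1 + m2, fun p =>
      if hle : p.2.val ≤ m1 then H1 (p.1, ⟨p.2.val, by omega⟩)
      else H2 (p.1, ⟨p.2.val - m1, by have := p.2.isLt; omega⟩), ?_, ?_, ?_⟩
  · intro p q hpq
    obtain ⟨h1, h2, h3⟩ := prod_adj_elim i X _ hpq
    obtain ⟨ha, hb⟩ := interval_adj_to _ h2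
    have hp := p.2.isLt
    have hq := q.2.isLt
    dsimp only
    split_ifs with hA hB hB
    · apply c1
      apply prod_adj_intro
      · exact h1
      · apply interval_adj_of <;> (simp only [Fin.val_mk]; omega)
      · intro hi
        rcases h3 hi with h3 | h3
        · exact Or.inl h3
        · exact Or.inr (Fin.ext (show p.2.val = q.2.val by rw [h3]))
    · -- p.2 = m1, q.2 = m1+1
      have hp2 : p.2.val = m1 := by omega
      have hq2 : q.2.val = m1 + 1 := by omega
      have e1' : (⟨p.2.val, by omega⟩ : Fin (m1 + 1)) = Fin.last m1 := by
        ext; simpa using hp2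
      rw [e1', e1, ← s2]
      apply c2
      apply prod_adj_intro
      · exact h1
      · apply interval_adj_of <;> (simp only [Fin.val_mk, Fin.val_zero]; omega)
      · intro hi
        rcases h3 hi with h3 | h3
        · exact Or.inl h3
        · exfalso
          have : p.2.val = q.2.val := by rw [h3]
          omega
    · -- q.2 = m1, p.2 = m1+1
      have hp2 : p.2.val = m1 + 1 := by omega
      have hq2 : q.2.val = m1 := by omega
      have e1' : (⟨q.2.val, by omega⟩ : Fin (m1 + 1)) = Fin.last m1 := by
        ext; simpa using hq2
      rw [e1', e1, ← s2]
      apply c2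
      apply prod_adj_intro
      · exact h1
      · apply interval_adj_of <;> (simp only [Fin.val_mk, Fin.val_zero]; omega)
      · intro hi
        rcases h3 hi with h3 | h3
        · exact Or.inl h3
        · exfalso
          have : p.2.val = q.2.val := by rw [h3]
          omega
    · apply c2
      apply prod_adj_intro
      · exact h1
      · apply interval_adj_of <;> (simp only [Fin.val_mk]; omega)
      · intro hi
        rcases h3 hi with h3 | h3
        · exact Or.inl h3
        · exact Or.inr (Fin.ext (show p.2.val - m1 = q.2.val - m1 by rw [h3]))
  · intro x
    show (if hle : (0 : Fin (m1 + m2 + 1)).val ≤ m1 then _ else _) = f x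
    rw [dif_pos (by simp)]
    have : (⟨(0 : Fin (m1 + m2 + 1)).val, by simp⟩ : Fin (m1 + 1)) = 0 := by
      ext; simp
    rw [this]; exact s1 x
  · intro x
    show (if hle : (Fin.last (m1 + m2)).val ≤ m1 then _ else _) = h x
    by_cases hm2 : m2 = 0
    · subst hm2
      rw [dif_pos (by simp [Fin.last])]
      have : (⟨(Fin.last (m1 + 0)).val, by simp [Fin.last]⟩ :
          Fin (m1 + 1)) = Fin.last m1 := by ext; simp [Fin.last]
      rw [this, e1, ← s2]
      have : (0 : Fin (0 + 1)) = Fin.last 0 := by ext; simp [Fin.last]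
      rw [this, e2]
    · rw [dif_neg (by simp [Fin.last]; omega)]
      have : (⟨(Fin.last (m1 + m2)).val - m1, by
          have : (Fin.last (m1 + m2)).val = m1 + m2 := rfl
          omega⟩ : Fin (m2 + 1)) = Fin.last m2 := by
        ext; simp [Fin.last]
      rw [this]; exact e2 x

lemma dh_step_left {i : ℕ} {X : DigImage} {μ : X.carrier × X.carrier → X.carrier}
    (hμ : DigContinuous (DigImage.prod i X X) X μ) {a b : X.carrier}
    (hab : X.adj a b) :
    DigHomotopic i X X (fun y => μ (a, y)) (fun y => μ (b, y)) := by
  refine ⟨1, fun p => μ (if p.2 = 0 then a else b, p.1), ?_, ?_, ?_⟩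
  · intro p q hpq
    obtain ⟨h1, h2, h3⟩ := prod_adj_elim i X _ hpq
    apply hμ
    apply prod_adj_intro
    · dsimp only
      split_ifs
      · exact X.adj_refl a
      · exact hab
      · exact X.adj_symm hab
      · exact X.adj_refl b
    · exact h1
    · intro hi
      rcases h3 hi with h3 | h3
      · exact Or.inr h3
      · exact Or.inl (by rw [h3])
  · intro x
    show μ (if (0 : Fin 2) = 0 then a else b, x) = μ (a, x)
    rw [if_pos rfl]
  · intro x
    show μ (if (Fin.last 1 : Fin 2) = 0 then a else b, x) = μ (b, x)
    rw [if_neg (by decide)]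

lemma dh_step_right {i : ℕ} {X : DigImage} {μ : X.carrier × X.carrier → X.carrier}
    (hμ : DigContinuous (DigImage.prod i X X) X μ) {a b : X.carrier}
    (hab : X.adj a b) :
    DigHomotopic i X X (fun y => μ (y, a)) (fun y => μ (y, b)) := by
  refine ⟨1, fun p => μ (p.1, if p.2 = 0 then a else b), ?_, ?_, ?_⟩
  · intro p q hpq
    obtain ⟨h1, h2, h3⟩ := prod_adj_elim i X _ hpq
    apply hμ
    apply prod_adj_intro
    · exact h1
    · dsimp only
      split_ifs
      · exact X.adj_refl a
      · exact hab
      · exact X.adj_symm hab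
      · exact X.adj_refl b
    · intro hi
      rcases h3 hi with h3 | h3
      · exact Or.inl h3
      · exact Or.inr (by rw [h3])
  · intro x
    show μ (x, if (0 : Fin 2) = 0 then a else b) = μ (x, a)
    rw [if_pos rfl]
  · intro x
    show μ (x, if (Fin.last 1 : Fin 2) = 0 then a else b) = μ (x, b)
    rw [if_neg (by decide)]


/-- In an `NP_i`-digital H-space `(X,e,μ)`, for every `x` in the
connected component of `e`, `μ_x ≃ᵢ id_X` and `ν_x ≃ᵢ id_X`. -/
theorem mu_nu_homotopic_to_id (i : ℕ) (hi : i = 1 ∨ i = 2)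
    (X : DigImage) (e : X.carrier) (μ : X.carrier × X.carrier → X.carrier)
    (h : IsHSpace i X e μ) (x : X.carrier)
    (hx : Relation.ReflTransGen X.adj e x) :
    DigHomotopic i X X (fun a => μ (x, a)) id ∧
    DigHomotopic i X X (fun a => μ (a, x)) id := by
  have hμc : ∀ c : X.carrier, DigContinuous X X (fun y => μ (c, y)) := by
    intro c a b hab
    exact h.continuous (prod_adj_intro i X X (X.adj_refl c) hab (fun _ => Or.inl rfl))
  have hμc' : ∀ c : X.carrier, DigContinuous X X (fun y => μ (y, c)) := by
    intro c a b hab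
    exact h.continuous (prod_adj_intro i X X hab (X.adj_refl c) (fun _ => Or.inr rfl))
  have chains : DigHomotopic i X X (fun a => μ (e, a)) (fun a => μ (x, a)) ∧
      DigHomotopic i X X (fun a => μ (a, e)) (fun a => μ (a, x)) := by
    induction hx with
    | refl => exact ⟨dh_refl i X X _ (hμc e), dh_refl i X X _ (hμc' e)⟩
    | tail hb hbc ih =>
        exact ⟨dh_trans ih.1 (dh_step_left h.continuous hbc),
               dh_trans ih.2 (dh_step_right h.continuous hbc)⟩
  exact ⟨dh_trans (dh_symm chains.1) h.left_unit,
         dh_trans (dh_symm chains.2) h.right_unit⟩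
end

section
/- Let (X,e_X,μ_X) be an NP_i-digital H-space for i ∈ {1,2}, and let (Y,e_Y) be a pointed digital image such that X and Y are NP_i-homotopy equivalent by pointed continuous maps f : (X,e_X) → (Y,e_Y) and g : (Y,e_Y) → (X,e_X) (so f∘g ≃_i id_Y and g∘f ≃_i id_X and f(e_X)=e_Y, g(e_Y)=e_X). Define μ_Y : Y × Y → Y by μ_Y = f ∘ μ_X ∘ (g × g). Then (Y,e_Y,μ_Y) is an NP_i-digital H-space, and (X,e_X,μ_X) and (Y,e_Y,μ_Y) are H-equivalent. -/
/-!
Digital homotopy is a congruence: it is an equivalence relation (homotopies are reversed and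
concatenated in time), it is preserved by pre- and post-composition with continuous maps, and it
is preserved by products of maps. For products one homotopes one factor at a time, which keeps
`NP_1`-adjacency. Hence the unit homotopies of `μ_X`, composed with `f` and `g` and followed by
`f ∘ g ≃ id`, give those of `μ_Y`, and `g ∘ f ≃ id` in each factor compares `f ∘ μ_X` with
`μ_Y ∘ (f × f)`, while `g ∘ μ_Y = (g ∘ f) ∘ μ_X ∘ (g × g) ≃ μ_X ∘ (g × g)`.
-/

namespace DigImage

variable {i : ℕ} {X Y : DigImage}

theorem prod_adj_iff {p q : X.carrier × Y.carrier} :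
    (X.prod i Y).adj p q ↔ X.adj p.1 q.1 ∧ Y.adj p.2 q.2 ∧ (i ≤ 1 → p.1 = q.1 ∨ p.2 = q.2) := by
  show (if i ≤ 1 then _ else _) ↔ _
  split_ifs with hi
  · constructor
    · rintro (⟨h1, h2⟩ | ⟨h2, h1⟩)
      · exact ⟨h1 ▸ X.adj_refl _, h2, fun _ => Or.inl h1⟩
      · exact ⟨h1, h2 ▸ Y.adj_refl _, fun _ => Or.inr h2⟩
    · rintro ⟨h1, h2, h⟩
      exact (h hi).imp (fun e => ⟨e, h2⟩) (fun e => ⟨e, h1⟩)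
  · exact ⟨fun h => ⟨h.1, h.2, fun h' => absurd h' hi⟩, fun h => ⟨h.1, h.2.1⟩⟩

end DigImage

open DigImage

theorem digInterval_adj_iff {m : ℕ} {a b : Fin (m + 1)} :
    (digInterval m).adj a b ↔ (a : ℕ) ≤ b + 1 ∧ (b : ℕ) ≤ a + 1 := by
  show |(a : ℤ) - (b : ℤ)| ≤ 1 ↔ _
  rw [abs_le]
  omega

namespace DigContinuous

variable {i : ℕ} {A B X Y Z : DigImage}

protected theorem id (X : DigImage) : DigContinuous X X id := fun _ _ h => h

theorem comp {g : Y.carrier → Z.carrier} {f : X.carrier → Y.carrier}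
    (hg : DigContinuous Y Z g) (hf : DigContinuous X Y f) :
    DigContinuous X Z (fun x => g (f x)) := fun _ _ h => hg (hf h)

theorem prodMap {φ : A.carrier → X.carrier} {ψ : B.carrier → Y.carrier}
    (hφ : DigContinuous A X φ) (hψ : DigContinuous B Y ψ) :
    DigContinuous (A.prod i B) (X.prod i Y) (fun p => (φ p.1, ψ p.2)) := by
  intro p q h
  obtain ⟨h1, h2, h3⟩ := prod_adj_iff.1 h
  exact prod_adj_iff.2 ⟨hφ h1, hψ h2, fun hi => (h3 hi).imp (congrArg φ) (congrArg ψ)⟩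

theorem swap : DigContinuous (X.prod i Y) (Y.prod i X) Prod.swap := by
  intro p q h
  obtain ⟨h1, h2, h3⟩ := prod_adj_iff.1 h
  exact prod_adj_iff.2 ⟨h2, h1, fun hi => (h3 hi).symm⟩

end DigContinuous

theorem digContinuous_rev {m : ℕ} : DigContinuous (digInterval m) (digInterval m) Fin.rev := by
  intro (a : Fin _) (b : Fin _) h
  have := digInterval_adj_iff.1 h
  refine digInterval_adj_iff.2 ?_
  simp only [Fin.val_rev]
  omega

section Concat

variable {m₁ m₂ : ℕ}

def concatTimeLeft (t : Fin (m₁ + m₂ + 1)) : Fin (m₁ + 1) := ⟨min t m₁, by omega⟩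

def concatTimeRight (t : Fin (m₁ + m₂ + 1)) : Fin (m₂ + 1) := ⟨t - m₁, by omega⟩

theorem digContinuous_concatTimeLeft :
    DigContinuous (digInterval (m₁ + m₂)) (digInterval m₁) concatTimeLeft := by
  intro (a : Fin _) (b : Fin _) h
  have := digInterval_adj_iff.1 h
  exact digInterval_adj_iff.2 (by simp only [concatTimeLeft]; omega)

theorem digContinuous_concatTimeRight :
    DigContinuous (digInterval (m₁ + m₂)) (digInterval m₂) concatTimeRight := by
  intro (a : Fin _) (b : Fin _) h
  have := digInterval_adj_iff.1 h
  exact digInterval_adj_iff.2 (by simp only [concatTimeRight]; omega)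

variable {α β : Type} {H₁ : α × Fin (m₁ + 1) → β} {H₂ : α × Fin (m₂ + 1) → β}

def concatHomotopy (H₁ : α × Fin (m₁ + 1) → β) (H₂ : α × Fin (m₂ + 1) → β)
    (p : α × Fin (m₁ + m₂ + 1)) : β :=
  if (p.2 : ℕ) ≤ m₁ then H₁ (p.1, concatTimeLeft p.2) else H₂ (p.1, concatTimeRight p.2)

theorem concatHomotopy_of_le {p : α × Fin (m₁ + m₂ + 1)} (hp : (p.2 : ℕ) ≤ m₁) :
    concatHomotopy H₁ H₂ p = H₁ (p.1, concatTimeLeft p.2) :=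
  if_pos hp

theorem concatHomotopy_of_ge (hmid : ∀ x, H₁ (x, Fin.last m₁) = H₂ (x, 0))
    {p : α × Fin (m₁ + m₂ + 1)} (hp : m₁ ≤ (p.2 : ℕ)) :
    concatHomotopy H₁ H₂ p = H₂ (p.1, concatTimeRight p.2) := by
  by_cases h : (p.2 : ℕ) ≤ m₁
  · have hl : concatTimeLeft p.2 = Fin.last m₁ := Fin.ext (by simp [concatTimeLeft]; omega)
    have hr : concatTimeRight p.2 = 0 := Fin.ext (by simp [concatTimeRight]; omega)
    rw [concatHomotopy_of_le h, hl, hr, hmid]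
  · exact if_neg h

end Concat

theorem digContinuous_concatHomotopy {i m₁ m₂ : ℕ} {X Y : DigImage}
    {H₁ : X.carrier × Fin (m₁ + 1) → Y.carrier} {H₂ : X.carrier × Fin (m₂ + 1) → Y.carrier}
    (hH₁ : DigContinuous (X.prod i (digInterval m₁)) Y H₁)
    (hH₂ : DigContinuous (X.prod i (digInterval m₂)) Y H₂)
    (hmid : ∀ x, H₁ (x, Fin.last m₁) = H₂ (x, 0)) :
    DigContinuous (X.prod i (digInterval (m₁ + m₂))) Y (concatHomotopy H₁ H₂) := by
  intro (p : X.carrier × Fin _) (q : X.carrier × Fin _) hpq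
  have hpq₁ := ((DigContinuous.id X).prodMap digContinuous_concatTimeLeft) hpq
  have hpq₂ := ((DigContinuous.id X).prodMap digContinuous_concatTimeRight) hpq
  have ht := digInterval_adj_iff.1 (prod_adj_iff.1 hpq).2.1
  -- adjacent times both lie in `[0, m₁]` or both in `[m₁, m₁ + m₂]`
  by_cases h : (p.2 : ℕ) ≤ m₁ ∧ (q.2 : ℕ) ≤ m₁
  · rw [concatHomotopy_of_le h.1, concatHomotopy_of_le h.2]
    exact hH₁ hpq₁
  · rw [concatHomotopy_of_ge hmid (by omega), concatHomotopy_of_ge hmid (by omega)]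
    exact hH₂ hpq₂

namespace DigHomotopic

variable {i : ℕ} {W X Y Z A B : DigImage}

theorem continuous_left {f g : X.carrier → Y.carrier} (h : DigHomotopic i X Y f g) :
    DigContinuous X Y f := by
  obtain ⟨m, H, hH, h0, -⟩ := h
  intro a b hab
  rw [← h0, ← h0]
  exact hH (prod_adj_iff.2
    ⟨hab, (digInterval m).adj_refl (0 : Fin (m + 1)), fun _ => Or.inr rfl⟩)

protected theorem symm {f g : X.carrier → Y.carrier} (h : DigHomotopic i X Y f g) :
    DigHomotopic i X Y g f := by
  obtain ⟨m, H, hH, h0, h1⟩ := h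
  refine ⟨m, fun p => H (p.1, Fin.rev p.2),
    hH.comp ((DigContinuous.id X).prodMap digContinuous_rev), fun x => ?_, fun x => ?_⟩
  · simpa using h1 x
  · simpa using h0 x

theorem continuous_right {f g : X.carrier → Y.carrier} (h : DigHomotopic i X Y f g) :
    DigContinuous X Y g :=
  h.symm.continuous_left

protected theorem trans {f g k : X.carrier → Y.carrier}
    (hfg : DigHomotopic i X Y f g) (hgk : DigHomotopic i X Y g k) :
    DigHomotopic i X Y f k := by
  obtain ⟨m₁, H₁, hH₁, h₁0, h₁1⟩ := hfg
  obtain ⟨m₂, H₂, hH₂, h₂0, h₂1⟩ := hgk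
  have hmid : ∀ x, H₁ (x, Fin.last m₁) = H₂ (x, 0) := fun x => by rw [h₁1, h₂0]
  refine ⟨m₁ + m₂, concatHomotopy H₁ H₂, digContinuous_concatHomotopy hH₁ hH₂ hmid,
    fun x => ?_, fun x => ?_⟩
  · rw [concatHomotopy_of_le (Nat.zero_le _), ← h₁0]
    rfl
  · rw [concatHomotopy_of_ge hmid (by simp), ← h₂1]
    exact congrArg (fun t => H₂ (x, t)) (Fin.ext (by simp [concatTimeRight]))

theorem comp_left {f g : X.carrier → Y.carrier} {φ : Y.carrier → Z.carrier}
    (hφ : DigContinuous Y Z φ) (hfg : DigHomotopic i X Y f g) :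
    DigHomotopic i X Z (fun x => φ (f x)) (fun x => φ (g x)) := by
  obtain ⟨m, H, hH, h0, h1⟩ := hfg
  exact ⟨m, fun p => φ (H p), hφ.comp hH,
    fun x => congrArg φ (h0 x), fun x => congrArg φ (h1 x)⟩

theorem comp_right {f g : X.carrier → Y.carrier} {k : W.carrier → X.carrier}
    (hk : DigContinuous W X k) (hfg : DigHomotopic i X Y f g) :
    DigHomotopic i W Y (fun w => f (k w)) (fun w => g (k w)) := by
  obtain ⟨m, H, hH, h0, h1⟩ := hfg
  exact ⟨m, fun p => H (k p.1, p.2), hH.comp (hk.prodMap (DigContinuous.id _)),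
    fun x => h0 _, fun x => h1 _⟩

theorem prodMap_left {u v : A.carrier → X.carrier} {w : B.carrier → Y.carrier}
    (h : DigHomotopic i A X u v) (hw : DigContinuous B Y w) :
    DigHomotopic i (A.prod i B) (X.prod i Y)
      (fun p => (u p.1, w p.2)) (fun p => (v p.1, w p.2)) := by
  obtain ⟨m, H, hH, h0, h1⟩ := h
  refine ⟨m, fun (P : (A.carrier × B.carrier) × Fin (m + 1)) => (H (P.1.1, P.2), w P.1.2), ?_,
    fun (p : A.carrier × B.carrier) => congrArg (·, w p.2) (h0 p.1),
    fun (p : A.carrier × B.carrier) => congrArg (·, w p.2) (h1 p.1)⟩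
  intro (P : (A.carrier × B.carrier) × Fin _) (Q : (A.carrier × B.carrier) × Fin _) hPQ
  obtain ⟨⟨a, b⟩, t⟩ := P
  obtain ⟨⟨a', b'⟩, t'⟩ := Q
  obtain ⟨hAB, ht, hPQ'⟩ := prod_adj_iff.1 hPQ
  obtain ⟨ha, hb, hab⟩ := prod_adj_iff.1 hAB
  dsimp only at ha hb hab hPQ' ht ⊢
  have hHt : X.adj (H (a, t)) (H (a', t')) :=
    hH (prod_adj_iff.2 ⟨ha, ht, fun hi => (hPQ' hi).imp (fun e => (Prod.mk.inj e).1) id⟩)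
  refine prod_adj_iff.2 ⟨hHt, hw hb, fun hi => ?_⟩
  rcases hPQ' hi with e | rfl
  · obtain ⟨-, rfl⟩ := Prod.mk.inj e
    exact Or.inr rfl
  · rcases hab hi with rfl | rfl
    · exact Or.inl rfl
    · exact Or.inr rfl

theorem prodMap_right {u : A.carrier → X.carrier} {v w : B.carrier → Y.carrier}
    (hu : DigContinuous A X u) (h : DigHomotopic i B Y v w) :
    DigHomotopic i (A.prod i B) (X.prod i Y)
      (fun p => (u p.1, v p.2)) (fun p => (u p.1, w p.2)) :=
  ((h.prodMap_left hu).comp_right DigContinuous.swap).comp_left DigContinuous.swap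

theorem prodMap {u v : A.carrier → X.carrier} {u' v' : B.carrier → Y.carrier}
    (h : DigHomotopic i A X u v) (h' : DigHomotopic i B Y u' v') :
    DigHomotopic i (A.prod i B) (X.prod i Y)
      (fun p => (u p.1, u' p.2)) (fun p => (v p.1, v' p.2)) :=
  (h.prodMap_left h'.continuous_left).trans (h'.prodMap_right h.continuous_right)

end DigHomotopic

theorem IsHSpace.transport {i : ℕ} {X Y : DigImage} {eX : X.carrier}
    {μX : X.carrier × X.carrier → X.carrier} (hX : IsHSpace i X eX μX) {eY : Y.carrier}
    {f : X.carrier → Y.carrier} {g : Y.carrier → X.carrier} (hf : DigContinuous X Y f)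
    (hg : DigContinuous Y X g) (hge : g eY = eX) (hfg : DigHomotopic i Y Y (f ∘ g) id) :
    IsHSpace i Y eY (fun p => f (μX (g p.1, g p.2))) where
  continuous := hf.comp (hX.continuous.comp (hg.prodMap hg))
  right_unit := by
    simp only [hge]
    exact ((hX.right_unit.comp_right hg).comp_left hf).trans hfg
  left_unit := by
    simp only [hge]
    exact ((hX.left_unit.comp_right hg).comp_left hf).trans hfg

theorem induced_hspace_general (i : ℕ)
    (X : DigImage) (eX : X.carrier) (μX : X.carrier × X.carrier → X.carrier)
    (hX : IsHSpace i X eX μX)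
    (Y : DigImage) (eY : Y.carrier)
    (f : X.carrier → Y.carrier) (g : Y.carrier → X.carrier)
    (hf : DigContinuous X Y f) (hg : DigContinuous Y X g)
    (hfe : f eX = eY) (hge : g eY = eX)
    (hfg : DigHomotopic i Y Y (f ∘ g) id)
    (hgf : DigHomotopic i X X (g ∘ f) id) :
    IsHSpace i Y eY (fun p => f (μX (g p.1, g p.2))) ∧
    HSpaceEquiv i X eX μX Y eY (fun p => f (μX (g p.1, g p.2))) := by
  refine ⟨hX.transport hf hg hge hfg, f, g, hf, hg, hfe, hge, hfg, hgf, ?_, ?_⟩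
  · exact (hgf.symm.prodMap hgf.symm).comp_left (φ := fun p => f (μX p)) (hf.comp hX.continuous)
  · exact hgf.comp_right (hX.continuous.comp (hg.prodMap hg))

/-- An H-space structure transported along a pointed homotopy
equivalence: `μ_Y = f ∘ μ_X ∘ (g × g)` makes `(Y,e_Y,μ_Y)` an `NP_i`-digital
H-space which is H-equivalent to `(X,e_X,μ_X)`. -/
theorem induced_hspace (i : ℕ) (hi : i = 1 ∨ i = 2)
    (X : DigImage) (eX : X.carrier) (μX : X.carrier × X.carrier → X.carrier)
    (hX : IsHSpace i X eX μX)
    (Y : DigImage) (eY : Y.carrier)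
    (f : X.carrier → Y.carrier) (g : Y.carrier → X.carrier)
    (hf : DigContinuous X Y f) (hg : DigContinuous Y X g)
    (hfe : f eX = eY) (hge : g eY = eX)
    (hfg : DigHomotopic i Y Y (f ∘ g) id)
    (hgf : DigHomotopic i X X (g ∘ f) id) :
    IsHSpace i Y eY (fun p => f (μX (g p.1, g p.2))) ∧
    HSpaceEquiv i X eX μX Y eY (fun p => f (μX (g p.1, g p.2))) :=
  induced_hspace_general i X eX μX hX Y eY f g hf hg hfe hge hfg hgf
end
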